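/- arXiv:2310.12687 — 2 statements merged into one kernel-verified Lean document; each statement's English description precedes it below -/
import Mathlib

section
/- Let σ and τ be permutations of {1,…,n} both avoiding the pattern 312. Then there exists a least upper bound μ of {σ, τ} in the right weak order on all permutations of {1,…,n}, and μ avoids 312; likewise there exists a greatest lower bound of {σ, τ} in the right weak order, and it avoids 312. Hence the 312-avoiding permutations form a sublattice of the right weak order (this sublattice is the Tamari lattice). -/
/-- The set of (value) inversions of a permutation `σ` of `{1,…,n}`;
the right weak order is `σ ≤ τ` iff `invSet σ ⊆ invSet τ`. -/
def invSet (n : ℕ) (σ : Equiv.Perm (Fin n)) : Set (Fin n × Fin n) :=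
  {p | p.1 < p.2 ∧ σ⁻¹ p.2 < σ⁻¹ p.1}

/-- `σ` avoids the pattern 312: no positions `p < q < r` with `σ q < σ r < σ p`. -/
def Avoids312 (n : ℕ) (σ : Equiv.Perm (Fin n)) : Prop :=
  ¬ ∃ p q r : Fin n, p < q ∧ q < r ∧ σ q < σ r ∧ σ r < σ p

/-!
Identify a permutation with its inversion relation `r a b ↔ a < b ∧ b comes before a`. These are
exactly the relations inside `<` that are transitive and cotransitive (`a < b < c` and `r a c`
force `r a b` or `r b c`). Hence the weak-order join of two permutations is the transitive closure
of the union of their inversion relations, and, since complementing inside `<` swaps transitivity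
and cotransitivity, the meet is the complement of the join of the complements. Avoiding 312 says
that `r a c` forces `r a b` whenever `a < b < c`; this survives transitive closure, and so does its
complemented form (`r a b` and `b < c` force `r a c`), so both the join and the meet avoid 312.
-/

open Relation

variable {α : Type*}

section Join

variable {r s g : α → α → Prop}

def invJoin (r s : α → α → Prop) : α → α → Prop := TransGen (r ⊔ s)

theorem le_invJoin_left : r ≤ invJoin r s := fun _ _ h => .single (.inl h)

theorem le_invJoin_right : s ≤ invJoin r s := fun _ _ h => .single (.inr h)

theorem invJoin_le [IsTrans α g] (hr : r ≤ g) (hs : s ≤ g) : invJoin r s ≤ g :=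
  transGen_minimal (sup_le hr hs)

end Join

section LT

variable [LT α] {r s : α → α → Prop}

def Cotransitive (r : α → α → Prop) : Prop :=
  ∀ ⦃a b c⦄, a < b → b < c → r a c → r a b ∨ r b c

def RightDownClosed (r : α → α → Prop) : Prop :=
  ∀ ⦃a b c⦄, a < b → b < c → r a c → r a b

def RightUpClosed (r : α → α → Prop) : Prop :=
  ∀ ⦃a b c⦄, r a b → b < c → r a c

structure IsInversionRel (r : α → α → Prop) : Prop extends IsTrans α r where
  le_lt : r ≤ (· < ·)
  cotrans : Cotransitive r

theorem Cotransitive.sup (hr : Cotransitive r) (hs : Cotransitive s) : Cotransitive (r ⊔ s) := by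
  rintro a b c hab hbc (h | h)
  exacts [(hr hab hbc h).imp Or.inl Or.inl, (hs hab hbc h).imp Or.inr Or.inr]

theorem RightDownClosed.sup (hr : RightDownClosed r) (hs : RightDownClosed s) :
    RightDownClosed (r ⊔ s) := by
  rintro a b c hab hbc (h | h)
  exacts [.inl (hr hab hbc h), .inr (hs hab hbc h)]

theorem RightUpClosed.sup (hr : RightUpClosed r) (hs : RightUpClosed s) :
    RightUpClosed (r ⊔ s) := by
  rintro a b c (h | h) hbc
  exacts [.inl (hr h hbc), .inr (hs h hbc)]

theorem RightUpClosed.transGen (hr : RightUpClosed r) : RightUpClosed (TransGen r) := by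
  intro a b c hab hbc
  obtain ⟨d, had, hdb⟩ := TransGen.tail'_iff.mp hab
  exact TransGen.tail' had (hr hdb hbc)

theorem cotransitive_sdiff [IsTrans α r] : Cotransitive ((· < ·) \ r) := by
  rintro a b c hab hbc ⟨-, hnac⟩
  by_cases hrab : r a b
  · exact .inr ⟨hbc, fun hrbc => hnac (_root_.trans hrab hrbc)⟩
  · exact .inl ⟨hab, hrab⟩

theorem RightUpClosed.rightDownClosed_sdiff (hr : RightUpClosed r) :
    RightDownClosed ((· < ·) \ r) := by
  rintro a b c hab hbc ⟨-, hnac⟩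
  exact ⟨hab, fun hrab => hnac (hr hrab hbc)⟩

end LT

section Preorder

variable [Preorder α] {r s g : α → α → Prop}

theorem Cotransitive.isTrans_sdiff (hr : Cotransitive r) : IsTrans α ((· < ·) \ r) :=
  ⟨fun _ _ _ ⟨hab, hnab⟩ ⟨hbc, hnbc⟩ =>
    ⟨hab.trans hbc, fun hac => (hr hab hbc hac).elim hnab hnbc⟩⟩

theorem RightDownClosed.rightUpClosed_sdiff (hr : RightDownClosed r) :
    RightUpClosed ((· < ·) \ r) := by
  rintro a b c ⟨hab, hnab⟩ hbc
  exact ⟨hab.trans hbc, fun hac => hnab (hr hab hbc hac)⟩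

theorem IsInversionRel.sdiff (hr : IsInversionRel r) : IsInversionRel ((· < ·) \ r) where
  toIsTrans := hr.cotrans.isTrans_sdiff
  le_lt := sdiff_le
  cotrans := have := hr.toIsTrans; cotransitive_sdiff

def invMeet (r s : α → α → Prop) : α → α → Prop :=
  (· < ·) \ invJoin ((· < ·) \ r) ((· < ·) \ s)

theorem invMeet_le_left : invMeet r s ≤ r := sdiff_le_comm.mpr le_invJoin_left

theorem invMeet_le_right : invMeet r s ≤ s := sdiff_le_comm.mpr le_invJoin_right

theorem le_invMeet (hg : IsInversionRel g) (hr : g ≤ r) (hs : g ≤ s) : g ≤ invMeet r s :=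
  have := hg.cotrans.isTrans_sdiff
  calc g = (· < ·) \ ((· < ·) \ g) := by rw [sdiff_sdiff_right_self, inf_eq_right.mpr hg.le_lt]
    _ ≤ invMeet r s :=
      sdiff_le_sdiff_left (invJoin_le (sdiff_le_sdiff_left hr) (sdiff_le_sdiff_left hs))

end Preorder

section LinearOrder

variable [LinearOrder α] {r s : α → α → Prop}

theorem Cotransitive.transGen (hr : Cotransitive r) : Cotransitive (TransGen r) := by
  intro a b c hab hbc hac
  induction hac with
  | single h => exact (hr hab hbc h).imp .single .single
  | @tail m c ham hmc ih =>
    rcases lt_trichotomy b m with hbm | rfl | hmb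
    · exact (ih hbm).imp id (·.tail hmc)
    · exact .inl ham
    · exact (hr hmb hbc hmc).imp ham.tail .single

theorem RightDownClosed.transGen (hr : RightDownClosed r) : RightDownClosed (TransGen r) := by
  intro a b c hab hbc hac
  induction hac with
  | single h => exact .single (hr hab hbc h)
  | @tail m c ham hmc ih =>
    rcases lt_trichotomy b m with hbm | rfl | hmb
    · exact ih hbm
    · exact ham
    · exact ham.tail (hr hmb hbc hmc)

theorem IsInversionRel.invJoin (hr : IsInversionRel r) (hs : IsInversionRel s) :
    IsInversionRel (invJoin r s) where
  trans _ _ _ := .trans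
  le_lt := invJoin_le hr.le_lt hs.le_lt
  cotrans := (hr.cotrans.sup hs.cotrans).transGen

theorem IsInversionRel.invMeet (hr : IsInversionRel r) (hs : IsInversionRel s) :
    IsInversionRel (invMeet r s) :=
  (hr.sdiff.invJoin hs.sdiff).sdiff

theorem RightDownClosed.invJoin (hr : RightDownClosed r) (hs : RightDownClosed s) :
    RightDownClosed (invJoin r s) :=
  (hr.sup hs).transGen

theorem RightDownClosed.invMeet (hr : RightDownClosed r) (hs : RightDownClosed s) :
    RightDownClosed (invMeet r s) :=
  (hr.rightUpClosed_sdiff.sup hs.rightUpClosed_sdiff).transGen.rightDownClosed_sdiff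

/-- `x` comes before `y` in the one-line notation of the permutation whose inversion relation
is `r`. -/
def placedBefore (r : α → α → Prop) (x y : α) : Prop := ((· < ·) \ r) x y ∨ r y x

theorem IsInversionRel.isStrictTotalOrder_placedBefore (hr : IsInversionRel r) :
    IsStrictTotalOrder α (placedBefore r) where
  trichotomous x y hxy hyx := by
    by_contra hne
    rcases lt_or_gt_of_ne hne with h | h
    · by_cases hrxy : r x y
      exacts [hyx (.inr hrxy), hxy (.inl ⟨h, hrxy⟩)]
    · by_cases hryx : r y x
      exacts [hxy (.inr hryx), hyx (.inl ⟨h, hryx⟩)]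
  irrefl x := by
    rintro (⟨h, -⟩ | h)
    exacts [lt_irrefl x h, lt_irrefl x (hr.le_lt _ _ h)]
  trans x y z := by
    have := hr.cotrans.isTrans_sdiff
    rintro (hxy | hryx) (hyz | hrzy)
    · exact .inl (_root_.trans hxy hyz)
    · rcases lt_trichotomy x z with hxz | rfl | hzx
      · exact .inl ⟨hxz, fun hrxz => hxy.2 (hr.trans _ _ _ hrxz hrzy)⟩
      · exact (hxy.2 hrzy).elim
      · exact .inr ((hr.cotrans hzx hxy.1 hrzy).resolve_right hxy.2)
    · rcases lt_trichotomy x z with hxz | rfl | hzx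
      · exact .inl ⟨hxz, fun hrxz => hyz.2 (hr.trans _ _ _ hryx hrxz)⟩
      · exact (hyz.2 hryx).elim
      · exact .inr ((hr.cotrans hyz.1 hzx hryx).resolve_left hyz.2)
    · exact .inr (hr.trans _ _ _ hrzy hryx)

end LinearOrder

theorem exists_equiv_fin_lt_iff [Fintype α] {n : ℕ} (hn : Fintype.card α = n)
    (r : α → α → Prop) [IsStrictTotalOrder α r] :
    ∃ f : α ≃ Fin n, ∀ x y, r x y ↔ f x < f y := by
  classical
  let := linearOrderOfSTO r
  exact ⟨(Fintype.orderIsoFinOfCardEq α hn).symm.toEquiv, fun x y =>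
    (Fintype.orderIsoFinOfCardEq α hn).symm.lt_iff_lt.symm⟩

namespace Equiv.Perm

variable {n : ℕ}

def inversionRel (σ : Perm (Fin n)) (a b : Fin n) : Prop := a < b ∧ σ⁻¹ b < σ⁻¹ a

instance (σ : Perm (Fin n)) : IsTrans (Fin n) σ.inversionRel :=
  ⟨fun _ _ _ hab hbc => ⟨hab.1.trans hbc.1, hbc.2.trans hab.2⟩⟩

theorem isInversionRel_inversionRel (σ : Perm (Fin n)) : IsInversionRel σ.inversionRel where
  le_lt _ _ h := h.1
  cotrans a b c hab hbc hac := by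
    rcases lt_or_ge (σ⁻¹ b) (σ⁻¹ a) with h | h
    exacts [.inl ⟨hab, h⟩, .inr ⟨hbc, hac.2.trans_le h⟩]

theorem exists_inversionRel_eq {r : Fin n → Fin n → Prop} (hr : IsInversionRel r) :
    ∃ σ : Perm (Fin n), σ.inversionRel = r := by
  have := hr.isStrictTotalOrder_placedBefore
  obtain ⟨f, hf⟩ := exists_equiv_fin_lt_iff (Fintype.card_fin n) (placedBefore r)
  refine ⟨f.symm, funext₂ fun a b => propext ?_⟩
  simp only [inversionRel, Perm.inv_def, symm_symm, ← hf, placedBefore]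
  exact ⟨fun ⟨hab, h⟩ => h.resolve_left fun hba => hab.not_gt hba.1,
    fun h => ⟨hr.le_lt _ _ h, .inr h⟩⟩

theorem avoids312_iff_rightDownClosed {σ : Perm (Fin n)} :
    Avoids312 n σ ↔ RightDownClosed σ.inversionRel := by
  refine ⟨fun hσ a b c hab hbc hac => ⟨hab, lt_of_not_ge fun hab' => hσ ?_⟩, ?_⟩
  · exact ⟨σ⁻¹ c, σ⁻¹ a, σ⁻¹ b, hac.2, hab'.lt_of_ne (σ⁻¹.injective.ne hab.ne),
      by simpa using hab, by simpa using hbc⟩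
  · rintro hσ ⟨p, q, r, hpq, hqr, hσqr, hσrp⟩
    have hσqp : σ.inversionRel (σ q) (σ p) := ⟨hσqr.trans hσrp, by simpa using hpq⟩
    exact lt_asymm hqr (by simpa using (hσ hσqr hσrp hσqp).2)

end Equiv.Perm

theorem invSet_subset_invSet_iff {n : ℕ} {σ τ : Equiv.Perm (Fin n)} :
    invSet n σ ⊆ invSet n τ ↔ σ.inversionRel ≤ τ.inversionRel :=
  ⟨fun h a b hab => h (a := (a, b)) hab, fun h p hp => h p.1 p.2 hp⟩

/-- 312-avoiding permutations form a sublattice of the right weak order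
(the Tamari lattice): two 312-avoiding permutations have a least upper bound
in the right weak order on all permutations, which avoids 312, and a greatest
lower bound, which also avoids 312. -/
theorem avoid312_sublattice_weak_order (n : ℕ) (σ τ : Equiv.Perm (Fin n))
    (hσ : Avoids312 n σ) (hτ : Avoids312 n τ) :
    (∃ μ : Equiv.Perm (Fin n), Avoids312 n μ ∧
      invSet n σ ⊆ invSet n μ ∧ invSet n τ ⊆ invSet n μ ∧
      ∀ ρ : Equiv.Perm (Fin n),
        invSet n σ ⊆ invSet n ρ → invSet n τ ⊆ invSet n ρ → invSet n μ ⊆ invSet n ρ) ∧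
    (∃ μ : Equiv.Perm (Fin n), Avoids312 n μ ∧
      invSet n μ ⊆ invSet n σ ∧ invSet n μ ⊆ invSet n τ ∧
      ∀ ρ : Equiv.Perm (Fin n),
        invSet n ρ ⊆ invSet n σ → invSet n ρ ⊆ invSet n τ → invSet n ρ ⊆ invSet n μ) := by
  simp only [invSet_subset_invSet_iff, Equiv.Perm.avoids312_iff_rightDownClosed] at hσ hτ ⊢
  have hσ' := σ.isInversionRel_inversionRel
  have hτ' := τ.isInversionRel_inversionRel
  constructor
  · obtain ⟨μ, hμ⟩ := Equiv.Perm.exists_inversionRel_eq (hσ'.invJoin hτ')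
    refine ⟨μ, ?_, ?_, ?_, fun ρ hσρ hτρ => ?_⟩ <;> rw [hμ]
    exacts [hσ.invJoin hτ, le_invJoin_left, le_invJoin_right, invJoin_le hσρ hτρ]
  · obtain ⟨μ, hμ⟩ := Equiv.Perm.exists_inversionRel_eq (hσ'.invMeet hτ')
    refine ⟨μ, ?_, ?_, ?_, fun ρ hρσ hρτ => ?_⟩ <;> rw [hμ]
    exacts [hσ.invMeet hτ, invMeet_le_left, invMeet_le_right,
      le_invMeet ρ.isInversionRel_inversionRel hρσ hρτ]
end

section
/- Fix n ≥ 1 and nonnegative integers s(2),…,s(n). The set of s-inversion functions g additionally satisfying g(c,a) ≤ g(c,b) for all 1 ≤ a < b < c ≤ n (the s-Tamari trees) is a sublattice of the s-weak order: the least upper bound and the greatest lower bound, taken in the poset of all s-inversion functions ordered componentwise, of two such functions again satisfy g(c,a) ≤ g(c,b) for all a < b < c. -/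
/-!
The meet of two `s`-Tamari functions `g`, `h` in the `s`-weak order is their pointwise minimum,
which is visibly Tamari. For the join, `k = max g h` is Tamari and bounded by `s` but in general
not transitive, so we close it under transitivity: `(transClosure k) c a` is the largest `k c b`
over all `b` reachable from `a` by steps `x → y` with `x < y < c` and `0 < k y x`. The closure is
still bounded by `s`, is transitive, and lies below every transitive upper bound of `k`. It stays
Tamari because `k c ·` is monotone below `c` and, by the same monotonicity, reachability of `b'`
from `a` implies reachability of `b'` from every `b ∈ [a, b']`. Since the Tamari condition implies
planarity, the minimum and the closure are `s`-inversion functions, hence they are the meet and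
the join, and any meet or join agrees with them below the diagonal.
-/

/-- `g` is an `s`-inversion function. -/
def IsSInvFun (n : ℕ) (s : Fin n → ℕ) (g : Fin n → Fin n → ℕ) : Prop :=
  (∀ a c : Fin n, a < c → g c a ≤ s c) ∧
  (∀ a b c : Fin n, a < b → b < c → 0 < g b a → g c b ≤ g c a) ∧
  (∀ a b c : Fin n, a < b → b < c → g b a < s b → g c a ≤ g c b)

/-- The componentwise order on `s`-inversion functions (the `s`-weak order). -/
def SLe (n : ℕ) (g h : Fin n → Fin n → ℕ) : Prop :=
  ∀ a c : Fin n, a < c → g c a ≤ h c a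

/-- The `s`-Tamari condition: `g c a ≤ g c b` for all `a < b < c`. -/
def IsSTamari (n : ℕ) (g : Fin n → Fin n → ℕ) : Prop :=
  ∀ a b c : Fin n, a < b → b < c → g c a ≤ g c b

open Relation

variable {n : ℕ} {s : Fin n → ℕ} {g h : Fin n → Fin n → ℕ}

def IsSBounded (n : ℕ) (s : Fin n → ℕ) (g : Fin n → Fin n → ℕ) : Prop :=
  ∀ a c : Fin n, a < c → g c a ≤ s c

def IsInvTransitive (n : ℕ) (g : Fin n → Fin n → ℕ) : Prop :=
  ∀ a b c : Fin n, a < b → b < c → 0 < g b a → g c b ≤ g c a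

theorem IsSInvFun.isSBounded (hg : IsSInvFun n s g) : IsSBounded n s g :=
  hg.1

theorem IsSInvFun.isInvTransitive (hg : IsSInvFun n s g) : IsInvTransitive n g :=
  hg.2.1

theorem IsSTamari.isSInvFun (hT : IsSTamari n g) (hb : IsSBounded n s g)
    (ht : IsInvTransitive n g) : IsSInvFun n s g :=
  ⟨hb, ht, fun a b c hab hbc _ => hT a b c hab hbc⟩

theorem IsSTamari.of_sLe_of_sLe (hg : IsSTamari n g) (hgh : SLe n g h) (hhg : SLe n h g) :
    IsSTamari n h :=
  fun a b c hab hbc =>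
    calc h c a ≤ g c a := hhg a c (hab.trans hbc)
      _ ≤ g c b := hg a b c hab hbc
      _ ≤ h c b := hgh b c hbc

theorem IsSTamari.inf (hg : IsSTamari n g) (hh : IsSTamari n h) : IsSTamari n (g ⊓ h) :=
  fun a b c hab hbc => inf_le_inf (hg a b c hab hbc) (hh a b c hab hbc)

theorem IsSTamari.sup (hg : IsSTamari n g) (hh : IsSTamari n h) : IsSTamari n (g ⊔ h) :=
  fun a b c hab hbc => sup_le_sup (hg a b c hab hbc) (hh a b c hab hbc)

theorem IsSBounded.inf_left (hg : IsSBounded n s g) : IsSBounded n s (g ⊓ h) :=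
  fun a c hac => inf_le_left.trans (hg a c hac)

theorem IsSBounded.sup (hg : IsSBounded n s g) (hh : IsSBounded n s h) :
    IsSBounded n s (g ⊔ h) :=
  fun a c hac => sup_le (hg a c hac) (hh a c hac)

theorem IsInvTransitive.inf (hg : IsInvTransitive n g) (hh : IsInvTransitive n h) :
    IsInvTransitive n (g ⊓ h) := fun a b c hab hbc hpos =>
  have hpos' := lt_inf_iff.mp hpos
  inf_le_inf (hg a b c hab hbc hpos'.1) (hh a b c hab hbc hpos'.2)

section TransClosure

variable {k : Fin n → Fin n → ℕ} {a b c : Fin n}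

def PosStep (k : Fin n → Fin n → ℕ) (c x y : Fin n) : Prop :=
  x < y ∧ y < c ∧ 0 < k y x

open Classical in
noncomputable def transClosure (k : Fin n → Fin n → ℕ) (c a : Fin n) : ℕ :=
  (Finset.univ.filter (ReflTransGen (PosStep k c) a)).sup (k c)

theorem le_transClosure (h : ReflTransGen (PosStep k c) a b) : k c b ≤ transClosure k c a :=
  Finset.le_sup (by simpa using h)

theorem transClosure_le {v : ℕ} (H : ∀ b, ReflTransGen (PosStep k c) a b → k c b ≤ v) :
    transClosure k c a ≤ v :=
  Finset.sup_le fun b hb => H b (by simpa using hb)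

theorem sLe_transClosure : SLe n k (transClosure k) :=
  fun _ _ _ => le_transClosure .refl

theorem Relation.ReflTransGen.posStep_eq_or_lt (h : ReflTransGen (PosStep k c) a b) :
    b = a ∨ b < c := by
  induction h with
  | refl => exact .inl rfl
  | tail _ hstep _ => exact .inr hstep.2.1

theorem Relation.ReflTransGen.posStep_lt (h : ReflTransGen (PosStep k c) a b) (hac : a < c) :
    b < c :=
  h.posStep_eq_or_lt.elim (fun hb => hb ▸ hac) id

theorem Relation.ReflTransGen.posStep_mono {d : Fin n} (hcd : c ≤ d)
    (h : ReflTransGen (PosStep k c) a b) :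
    ReflTransGen (PosStep k d) a b :=
  h.lift id fun _ _ hxy => ⟨hxy.1, hxy.2.1.trans_le hcd, hxy.2.2⟩

/-- For Tamari `k`, a step `x → y` can start anywhere in `[x, y)`. -/
theorem Relation.ReflTransGen.posStep_of_le_of_le (hk : IsSTamari n k) {b' : Fin n}
    (h : ReflTransGen (PosStep k c) a b') (hab : a ≤ b) (hbb' : b ≤ b') :
    ReflTransGen (PosStep k c) b b' := by
  induction h generalizing b with
  | refl => exact le_antisymm hbb' hab ▸ .refl
  | @tail x y _ hstep ih =>
    rcases le_or_gt b x with hbx | hxb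
    · exact (ih hab hbx).tail hstep
    · rcases hbb'.eq_or_lt with rfl | hby
      · exact .refl
      · exact .single ⟨hby, hstep.2.1, hstep.2.2.trans_le (hk x b y hxb hby)⟩

theorem IsSBounded.transClosure (hk : IsSBounded n s k) : IsSBounded n s (transClosure k) :=
  fun _ c hac => transClosure_le fun b hb => hk b c (hb.posStep_lt hac)

theorem isInvTransitive_transClosure : IsInvTransitive n (transClosure k) := by
  intro a b c hab hbc hpos
  obtain ⟨b₀, hb₀, hkb₀⟩ := Finset.lt_sup_iff.mp hpos
  have hab₀ : ReflTransGen (PosStep k b) a b₀ := by simpa using hb₀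
  have hab' : ReflTransGen (PosStep k c) a b :=
    (hab₀.posStep_mono hbc.le).tail ⟨hab₀.posStep_lt hab, hbc, hkb₀⟩
  exact transClosure_le fun b' hbb' => le_transClosure (hab'.trans hbb')

theorem IsSTamari.transClosure (hk : IsSTamari n k) : IsSTamari n (transClosure k) := by
  intro a b c hab hbc
  refine transClosure_le fun b' hab' => ?_
  rcases le_or_gt b b' with hbb' | hb'b
  · exact le_transClosure (hab'.posStep_of_le_of_le hk hab.le hbb')
  · exact (hk b' b c hb'b hbc).trans (sLe_transClosure b c hbc)

theorem IsInvTransitive.transClosure_sLe {u : Fin n → Fin n → ℕ} (hu : IsInvTransitive n u)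
    (hku : SLe n k u) : SLe n (transClosure k) u := by
  intro a c hac
  have reach_le : ∀ b, ReflTransGen (PosStep k c) a b → u c b ≤ u c a := by
    intro b hb
    induction hb with
    | refl => exact le_rfl
    | @tail x y _ hstep ih =>
      exact (hu x y c hstep.1 hstep.2.1 (hstep.2.2.trans_le (hku x y hstep.1))).trans ih
  exact transClosure_le fun b hb => (hku b c (hb.posStep_lt hac)).trans (reach_le b hb)

end TransClosure

theorem s_tamari_sublattice_general (n : ℕ) (s : Fin n → ℕ)
    (g h : Fin n → Fin n → ℕ)
    (hg : IsSInvFun n s g) (hh : IsSInvFun n s h)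
    (hgT : IsSTamari n g) (hhT : IsSTamari n h) :
    (∀ m : Fin n → Fin n → ℕ, IsSInvFun n s m → SLe n m g → SLe n m h →
      (∀ u : Fin n → Fin n → ℕ, IsSInvFun n s u → SLe n u g → SLe n u h →
        SLe n u m) →
      IsSTamari n m) ∧
    (∀ jn : Fin n → Fin n → ℕ, IsSInvFun n s jn → SLe n g jn → SLe n h jn →
      (∀ u : Fin n → Fin n → ℕ, IsSInvFun n s u → SLe n g u → SLe n h u →
        SLe n jn u) →
      IsSTamari n jn) := by
  refine ⟨fun m _ hmg hmh hglb => ?_, fun jn hjn hgj hhj hlub => ?_⟩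
  · have hinf : IsSInvFun n s (g ⊓ h) := (hgT.inf hhT).isSInvFun hg.isSBounded.inf_left
      (hg.isInvTransitive.inf hh.isInvTransitive)
    exact (hgT.inf hhT).of_sLe_of_sLe
      (hglb _ hinf (fun _ _ _ => inf_le_left) (fun _ _ _ => inf_le_right))
      (fun a c hac => le_inf (hmg a c hac) (hmh a c hac))
  · have hkT : IsSTamari n (g ⊔ h) := hgT.sup hhT
    have hJ : IsSInvFun n s (transClosure (g ⊔ h)) := hkT.transClosure.isSInvFun
      (hg.isSBounded.sup hh.isSBounded).transClosure isInvTransitive_transClosure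
    have hk : SLe n (g ⊔ h) (transClosure (g ⊔ h)) := sLe_transClosure
    exact hkT.transClosure.of_sLe_of_sLe
      (hjn.isInvTransitive.transClosure_sLe fun a c hac => sup_le (hgj a c hac) (hhj a c hac))
      (hlub _ hJ (fun a c hac => le_sup_left.trans (hk a c hac))
        (fun a c hac => le_sup_right.trans (hk a c hac)))

/-- The `s`-Tamari trees (the `s`-inversion functions satisfying
`g c a ≤ g c b` for all `a < b < c`) form a sublattice of the `s`-weak order:
any greatest lower bound and any least upper bound — taken in the poset of all
`s`-inversion functions ordered componentwise — of two such functions again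
satisfies the `s`-Tamari condition. -/
theorem s_tamari_sublattice (n : ℕ) (hn : 1 ≤ n) (s : Fin n → ℕ)
    (g h : Fin n → Fin n → ℕ)
    (hg : IsSInvFun n s g) (hh : IsSInvFun n s h)
    (hgT : IsSTamari n g) (hhT : IsSTamari n h) :
    (∀ m : Fin n → Fin n → ℕ, IsSInvFun n s m → SLe n m g → SLe n m h →
      (∀ u : Fin n → Fin n → ℕ, IsSInvFun n s u → SLe n u g → SLe n u h →
        SLe n u m) →
      IsSTamari n m) ∧
    (∀ jn : Fin n → Fin n → ℕ, IsSInvFun n s jn → SLe n g jn → SLe n h jn →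
      (∀ u : Fin n → Fin n → ℕ, IsSInvFun n s u → SLe n g u → SLe n h u →
        SLe n jn u) →
      IsSTamari n jn) :=
  s_tamari_sublattice_general n s g h hg hh hgT hhT
end
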